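/- arXiv:math/0412296 — 2 statements merged into one kernel-verified Lean document; each statement's English description precedes it below -/
import Mathlib

section
/- (Bernstein inequality on the torus) If b is a trigonometric polynomial of degree at most N, then ‖b'‖_∞ ≤ N‖b‖_∞. -/
/-!
M. Riesz's interpolation formula: for the nodes `θ_k = (2k+1)π/(2N)`, `k < 2N`, there are
coefficients `λ_k` with `b'(x) = ∑ₖ λ_k b(x + θ_k)` for every trigonometric polynomial `b` of
degree at most `N`. It suffices that `∑ₖ λ_k e^{inθ_k} = in` for `|n| ≤ N`; the discrete Fourier
transform of `m ↦ im` on `(-N, N]` does this, the case `n = -N` following from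
`e^{-iNθ_k} = -e^{iNθ_k}`. Multiplying by `(z - 1)²` with `z = e^{-iθ_k}`, a root of `z^{2N} = -1`,
sums the transform in closed form: `2N λ_k (1 - cos θ_k) = (-1)^k`. So `(-1)^k λ_k = |λ_k|`, and the
identity at `n = N`, where `e^{iNθ_k} = i(-1)^k`, gives `∑ₖ |λ_k| = N`; hence `|b'| ≤ N ‖b‖_∞`.
-/

open Real Finset
open Complex (exp I)

theorem sum_pow_zpow_eq_zero_of_not_dvd {K : Type*} [Field K] {ζ : K} {M : ℕ}
    (hζ : IsPrimitiveRoot ζ M) {j : ℤ} (hj : ¬ (M : ℤ) ∣ j) :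
    ∑ k ∈ range M, (ζ ^ j) ^ k = 0 := by
  have hne : ζ ^ j - 1 ≠ 0 := sub_ne_zero.2 fun h => hj ((hζ.zpow_eq_one_iff_dvd j).1 h)
  refine eq_zero_of_ne_zero_of_mul_right_eq_zero hne ?_
  rw [geom_sum_mul, ← zpow_natCast, ← zpow_mul, mul_comm, zpow_mul, zpow_natCast,
    hζ.pow_eq_one, one_zpow, sub_self]

theorem sq_sub_one_mul_sum_range_add_mul_pow {R : Type*} [CommRing R] (z c : R) (L : ℕ) :
    (z - 1) ^ 2 * ∑ j ∈ range L, (j + c) * z ^ j =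
      (L - 1 + c) * z ^ (L + 1) - (L + c) * z ^ L + (1 - c) * z + c := by
  induction L with
  | zero =>
    simp only [range_zero, sum_empty, mul_zero, Nat.cast_zero, zero_add, pow_zero, mul_one]
    ring
  | succ L ih =>
    rw [sum_range_succ, mul_add, ih]
    push_cast
    ring

theorem sq_sub_one_mul_sum_Ioc_mul_zpow {K : Type*} [Field K] {z : K} (hz : z ≠ 0) {N : ℕ}
    (h : z ^ (2 * N) = -1) :
    (z - 1) ^ 2 * ∑ m ∈ Ioc (-(N : ℤ)) N, (m : K) * z ^ m = 2 * z ^ (1 - (N : ℤ)) := by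
  have hterm (j : ℕ) : (((-(N : ℤ) + 1 + j : ℤ) : K)) * z ^ (-(N : ℤ) + 1 + j) =
      z ^ (1 - (N : ℤ)) * ((j + (1 - N)) * z ^ j) := by
    rw [zpow_add₀ hz, zpow_natCast]
    push_cast
    ring_nf
  rw [Int.Ioc_eq_finset_map, sum_map]
  simp only [Function.Embedding.trans_apply, Nat.castEmbedding_apply, addLeftEmbedding_apply,
    hterm, ← mul_sum, sub_neg_eq_add, show ((N : ℤ) + N).toNat = 2 * N by omega]
  rw [mul_left_comm, sq_sub_one_mul_sum_range_add_mul_pow, pow_succ, h]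
  push_cast
  ring

noncomputable def rieszNode (N k : ℕ) : ℝ := (2 * k + 1) * π / (2 * N)

theorem sum_exp_int_mul_rieszNode_eq_zero {N : ℕ} {j : ℤ} (hj : ¬ (2 * N : ℤ) ∣ j) :
    ∑ k ∈ range (2 * N), exp (I * j * rieszNode N k) = 0 := by
  rcases N.eq_zero_or_pos with rfl | hN
  · simp
  have hζ := Complex.isPrimitiveRoot_exp (2 * N) (by positivity)
  have hterm (k : ℕ) : exp (I * j * rieszNode N k) =
      exp (I * j * rieszNode N 0) * (exp (2 * π * I / (2 * N : ℕ)) ^ j) ^ k := by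
    rw [← Complex.exp_int_mul, ← Complex.exp_nat_mul, ← Complex.exp_add]
    congr 1
    push_cast [rieszNode]
    field_simp
    ring
  rw [sum_congr rfl fun k _ => hterm k, ← mul_sum,
    sum_pow_zpow_eq_zero_of_not_dvd hζ (by exact_mod_cast hj), mul_zero]

theorem exp_natCast_mul_rieszNode {N : ℕ} (hN : 0 < N) (k : ℕ) :
    exp (I * N * rieszNode N k) = I * (-1) ^ k := by
  have hN' : (N : ℂ) ≠ 0 := by exact_mod_cast hN.ne'
  have harg : I * N * rieszNode N k = (2 * k + 1 : ℕ) * (π / 2 * I) := by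
    push_cast [rieszNode]
    field_simp
  rw [harg, Complex.exp_nat_mul, Complex.exp_pi_div_two_mul_I, pow_succ, pow_mul, Complex.I_sq]
  ring

noncomputable def rieszCoeff (N k : ℕ) : ℂ :=
  (2 * N : ℂ)⁻¹ * ∑ m ∈ Ioc (-(N : ℤ)) N, I * m * exp (-(I * m * rieszNode N k))

theorem sum_rieszCoeff_mul_exp_of_mem_Ioc {N : ℕ} {n : ℤ} (hn : n ∈ Ioc (-(N : ℤ)) N) :
    ∑ k ∈ range (2 * N), rieszCoeff N k * exp (I * n * rieszNode N k) = I * n := by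
  have hN : (N : ℂ) ≠ 0 := by
    simp only [mem_Ioc] at hn
    exact_mod_cast (by omega : N ≠ 0)
  have horth (m : ℤ) (hm : m ∈ Ioc (-(N : ℤ)) N) (hmn : m ≠ n) :
      ∑ k ∈ range (2 * N), exp (I * ↑(n - m) * rieszNode N k) = 0 := by
    refine sum_exp_int_mul_rieszNode_eq_zero fun hdvd => hmn ?_
    have := Int.eq_zero_of_abs_lt_dvd hdvd (by simp only [mem_Ioc] at hn hm; rw [abs_lt]; omega)
    omega
  calc ∑ k ∈ range (2 * N), rieszCoeff N k * exp (I * n * rieszNode N k)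
      = (2 * N : ℂ)⁻¹ * ∑ m ∈ Ioc (-(N : ℤ)) N,
          I * m * ∑ k ∈ range (2 * N), exp (I * ↑(n - m) * rieszNode N k) := by
        simp_rw [rieszCoeff, mul_sum, sum_mul]
        rw [sum_comm]
        refine sum_congr rfl fun m _ => sum_congr rfl fun k _ => ?_
        rw [mul_assoc _ (I * m * _), mul_assoc (I * m), ← Complex.exp_add]
        push_cast
        ring_nf
    _ = (2 * N : ℂ)⁻¹ * (I * n * (2 * N)) := by
        rw [sum_eq_single_of_mem n hn fun m hm hmn => by rw [horth m hm hmn, mul_zero]]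
        simp
    _ = I * n := by field_simp

theorem exp_neg_natCast_mul_rieszNode {N : ℕ} (hN : 0 < N) (k : ℕ) :
    exp (I * ↑(-(N : ℤ)) * rieszNode N k) = -exp (I * N * rieszNode N k) := by
  have hsq : exp (I * N * rieszNode N k) ^ 2 = -1 := by
    rw [exp_natCast_mul_rieszNode hN, mul_pow, Complex.I_sq, ← pow_mul, pow_mul', neg_one_sq,
      one_pow, mul_one]
  rw [Int.cast_neg, Int.cast_natCast, mul_neg, neg_mul, Complex.exp_neg]
  field_simp [Complex.exp_ne_zero]
  linear_combination hsq

theorem sum_rieszCoeff_mul_exp {N : ℕ} {n : ℤ} (hn : n ∈ Icc (-(N : ℤ)) N) :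
    ∑ k ∈ range (2 * N), rieszCoeff N k * exp (I * n * rieszNode N k) = I * n := by
  rcases eq_or_ne n (-N) with rfl | hne
  · rcases N.eq_zero_or_pos with rfl | hN
    · simp
    simp_rw [exp_neg_natCast_mul_rieszNode hN, mul_neg, sum_neg_distrib]
    rw [← Int.cast_natCast, sum_rieszCoeff_mul_exp_of_mem_Ioc (by simp only [mem_Ioc]; omega)]
    push_cast
    ring
  · exact sum_rieszCoeff_mul_exp_of_mem_Ioc (by simp only [mem_Icc, mem_Ioc] at hn ⊢; omega)

theorem two_mul_rieszCoeff_mul_one_sub_cos {N : ℕ} (hN : 0 < N) (k : ℕ) :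
    2 * N * rieszCoeff N k * (1 - Real.cos (rieszNode N k)) = (-1) ^ k := by
  set z := exp (-(I * rieszNode N k)) with hz_def
  have hz : z ≠ 0 := Complex.exp_ne_zero _
  have hN' : (N : ℂ) ≠ 0 := by exact_mod_cast hN.ne'
  have hzpow (m : ℤ) : exp (-(I * m * rieszNode N k)) = z ^ m := by
    rw [hz_def, ← Complex.exp_int_mul]
    ring_nf
  have hcos : (Real.cos (rieszNode N k) : ℂ) = (z + z⁻¹) / 2 := by
    rw [Complex.ofReal_cos, Complex.cos, hz_def, ← Complex.exp_neg]
    ring_nf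
  have hzN : z ^ (-(N : ℤ)) = I * (-1) ^ k := by
    rw [← hzpow, ← exp_natCast_mul_rieszNode hN]
    push_cast
    ring_nf
  have hz2N : z ^ (2 * N) = -1 := by
    have hinv : (z ^ N)⁻¹ = I * (-1) ^ k := by rw [← zpow_natCast, ← zpow_neg, hzN]
    rw [pow_mul', ← inv_inv (z ^ N), hinv, inv_pow, mul_pow, Complex.I_sq, ← pow_mul, pow_mul',
      neg_one_sq]
    norm_num
  have hS : 2 * N * rieszCoeff N k = I * ∑ m ∈ Ioc (-(N : ℤ)) N, (m : ℂ) * z ^ m := by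
    rw [rieszCoeff, ← mul_assoc, mul_inv_cancel₀ (by simpa using hN'), one_mul, mul_sum]
    refine sum_congr rfl fun m _ => ?_
    rw [hzpow]
    ring
  have hzpow_sub : z ^ (1 - (N : ℤ)) = z * z ^ (-(N : ℤ)) := by
    rw [sub_eq_add_neg, zpow_add₀ hz, zpow_one]
  calc 2 * N * rieszCoeff N k * (1 - Real.cos (rieszNode N k))
      = -I * ((z - 1) ^ 2 * ∑ m ∈ Ioc (-(N : ℤ)) N, (m : ℂ) * z ^ m) / (2 * z) := by
        rw [hS, hcos]
        field_simp
        ring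
    _ = (-1) ^ k := by
        rw [sq_sub_one_mul_sum_Ioc_mul_zpow hz hz2N, hzpow_sub, hzN]
        field_simp
        linear_combination -Complex.I_sq

theorem norm_rieszCoeff {N : ℕ} (hN : 0 < N) (k : ℕ) :
    (‖rieszCoeff N k‖ : ℂ) = (-1) ^ k * rieszCoeff N k := by
  set r := 1 - Real.cos (rieszNode N k)
  have h : 2 * N * rieszCoeff N k * r = (-1) ^ k := by
    simp only [r, Complex.ofReal_sub, Complex.ofReal_one]
    exact two_mul_rieszCoeff_mul_one_sub_cos hN k
  have hr : 0 < r := by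
    refine lt_of_le_of_ne (sub_nonneg.2 (Real.cos_le_one _)) fun hr => ?_
    rw [← hr, Complex.ofReal_zero, mul_zero] at h
    exact pow_ne_zero k (neg_ne_zero.2 one_ne_zero) h.symm
  have hcoeff : rieszCoeff N k = (-1) ^ k * ((2 * N * r)⁻¹ : ℝ) := by
    have : (r : ℂ) ≠ 0 := by exact_mod_cast hr.ne'
    have hN' : (N : ℂ) ≠ 0 := by exact_mod_cast hN.ne'
    push_cast
    field_simp
    linear_combination h
  rw [hcoeff, norm_mul, norm_pow, norm_neg, norm_one, one_pow, one_mul, Complex.norm_real,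
    Real.norm_of_nonneg (by positivity), ← mul_assoc, ← mul_pow, neg_one_mul, neg_neg, one_pow,
    one_mul]

theorem sum_norm_rieszCoeff (N : ℕ) : ∑ k ∈ range (2 * N), ‖rieszCoeff N k‖ = N := by
  rcases N.eq_zero_or_pos with rfl | hN
  · simp
  have h := sum_rieszCoeff_mul_exp (N := N) (n := N) (by simp)
  simp_rw [Int.cast_natCast, exp_natCast_mul_rieszNode hN] at h
  apply Complex.ofReal_injective
  push_cast
  refine mul_left_cancel₀ Complex.I_ne_zero ?_
  rw [← h, mul_sum]
  refine sum_congr rfl fun k _ => ?_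
  rw [norm_rieszCoeff hN]
  ring

noncomputable def trigPoly (N : ℕ) (c : ℤ → ℂ) (t : ℝ) : ℂ :=
  ∑ n ∈ Icc (-(N : ℤ)) N, c n * exp (I * n * t)

theorem hasDerivAt_trigPoly (N : ℕ) (c : ℤ → ℂ) (x : ℝ) :
    HasDerivAt (trigPoly N c) (∑ n ∈ Icc (-(N : ℤ)) N, c n * (I * n * exp (I * n * x))) x := by
  refine HasDerivAt.fun_sum fun n _ => HasDerivAt.const_mul (c n) ?_
  simpa [mul_comm] using ((hasDerivAt_id x).ofReal_comp.const_mul (I * n)).cexp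

theorem sum_rieszCoeff_mul_trigPoly_add (N : ℕ) (c : ℤ → ℂ) (x : ℝ) :
    ∑ k ∈ range (2 * N), rieszCoeff N k * trigPoly N c (x + rieszNode N k) =
      ∑ n ∈ Icc (-(N : ℤ)) N, c n * (I * n * exp (I * n * x)) := by
  simp_rw [trigPoly, mul_sum]
  rw [sum_comm]
  refine sum_congr rfl fun n hn => ?_
  have hshift :
      ∑ k ∈ range (2 * N), rieszCoeff N k * (c n * exp (I * n * ↑(x + rieszNode N k))) =
        c n * exp (I * n * x) *
          ∑ k ∈ range (2 * N), rieszCoeff N k * exp (I * n * rieszNode N k) := by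
    rw [mul_sum]
    refine sum_congr rfl fun k _ => ?_
    rw [Complex.ofReal_add, mul_add, Complex.exp_add]
    ring
  rw [hshift, sum_rieszCoeff_mul_exp hn]
  ring

theorem bddAbove_range_norm_trigPoly (N : ℕ) (c : ℤ → ℂ) :
    BddAbove (Set.range fun t => ‖trigPoly N c t‖) := by
  refine ⟨∑ n ∈ Icc (-(N : ℤ)) N, ‖c n‖, ?_⟩
  rintro _ ⟨t, rfl⟩
  refine (norm_sum_le _ _).trans (sum_le_sum fun n _ => ?_)
  rw [norm_mul, Complex.norm_exp]
  simp

/-- Bernstein inequality on the torus: if `b` is a trigonometric polynomial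
of degree at most `N`, then `‖b'‖_∞ ≤ N ‖b‖_∞`. -/
theorem bernstein_torus (N : ℕ) (c : ℤ → ℂ) :
    ∀ x : ℝ,
      ‖deriv (fun t : ℝ => ∑ n ∈ Finset.Icc (-(N : ℤ)) (N : ℤ),
          c n * Complex.exp (Complex.I * n * t)) x‖ ≤
      (N : ℝ) * sSup (Set.range fun t : ℝ =>
        ‖∑ n ∈ Finset.Icc (-(N : ℤ)) (N : ℤ), c n * Complex.exp (Complex.I * n * t)‖) := by
  intro x
  change ‖deriv (trigPoly N c) x‖ ≤ N * sSup (Set.range fun t => ‖trigPoly N c t‖)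
  have hM (t : ℝ) : ‖trigPoly N c t‖ ≤ sSup (Set.range fun t => ‖trigPoly N c t‖) :=
    le_csSup (bddAbove_range_norm_trigPoly N c) ⟨t, rfl⟩
  rw [(hasDerivAt_trigPoly N c x).deriv, ← sum_rieszCoeff_mul_trigPoly_add, ← sum_norm_rieszCoeff,
    sum_mul]
  refine (norm_sum_le _ _).trans (sum_le_sum fun k _ => ?_)
  rw [norm_mul]
  exact mul_le_mul_of_nonneg_left (hM _) (norm_nonneg _)
end

section
/- Let 0 < α < 1, 1 < p̃ < ∞, 0 < α' < 1 with 1/p = 1/p̃ - α' and p > 1. Let β ∈ ℝ, and let f be supported in (-r, r) with ‖f‖_∞ ≤ r^{-1/q} and ∫ f = 0, where α = 1/q - 1/p and q ≤ 1. Then A₁(x) = 1_{(-2r,2r)}(x) ∫ [b(x+β(s-x)) - b(x)] f(s) ds/(x-s) satisfies ‖A₁‖_{L^p(ℝ)} ≤ C|β|^α r^{α-α'} ‖b‖_{Λ_α(ℝ)} ‖f‖_{L^{p̃}(ℝ)} ≤ C'|β|^α ‖b‖_{Λ_α(ℝ)}. -/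
open Real MeasureTheory
open scoped ENNReal

lemma lint_abs_rpow_bound {e : ℝ} (he : -1 < e) (he1 : 0 < e + 1) (c R : ℝ) (hR : 0 < R) :
    ∫⁻ u in Set.Ioo (c - R) (c + R), ENNReal.ofReal (|u - c| ^ e) ≤
      ENNReal.ofReal (2 * R ^ (e + 1) / (e + 1)) := by
  have hval : ∫ u in (0:ℝ)..R, u ^ e = R ^ (e + 1) / (e + 1) := by
    rw [integral_rpow (Or.inl he), Real.zero_rpow (by linarith : e + 1 ≠ 0)]
    ring
  have hvnn : 0 ≤ R ^ (e + 1) / (e + 1) :=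
    div_nonneg (Real.rpow_nonneg hR.le _) he1.le
  have hiiR : IntervalIntegrable (fun u : ℝ => (u - c) ^ e) volume c (c + R) := by
    have h := (intervalIntegral.intervalIntegrable_rpow' (a := 0) (b := R) he).comp_sub_right c
    simpa [zero_add, add_comm] using h
  have hintR : IntegrableOn (fun u : ℝ => (u - c) ^ e) (Set.Ioc c (c + R)) volume :=
    (intervalIntegrable_iff_integrableOn_Ioc_of_le (by linarith)).mp hiiR
  have hR1 : ∫⁻ u in Set.Ioc c (c + R), ENNReal.ofReal (|u - c| ^ e) ≤
      ENNReal.ofReal (R ^ (e + 1) / (e + 1)) := by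
    have hcongr : ∫⁻ u in Set.Ioc c (c + R), ENNReal.ofReal (|u - c| ^ e) =
        ∫⁻ u in Set.Ioc c (c + R), ENNReal.ofReal ((u - c) ^ e) := by
      refine setLIntegral_congr_fun measurableSet_Ioc (fun u hu => ?_)
      rw [abs_of_pos (sub_pos.2 hu.1)]
    rw [hcongr, ← ofReal_integral_eq_lintegral_ofReal hintR
      ((ae_restrict_iff' measurableSet_Ioc).2 (ae_of_all _ fun u hu =>
        Real.rpow_nonneg (by linarith [hu.1]) e))]
    refine ENNReal.ofReal_le_ofReal (le_of_eq ?_)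
    rw [← intervalIntegral.integral_of_le (by linarith : c ≤ c + R)]
    rw [intervalIntegral.integral_comp_sub_right (fun v : ℝ => v ^ e) c]
    simpa using hval
  have hiiL : IntervalIntegrable (fun u : ℝ => (c - u) ^ e) volume (c - R) c := by
    have h := ((intervalIntegral.intervalIntegrable_rpow' (a := 0) (b := R) he).comp_sub_left c).symm
    simpa using h
  have hintL : IntegrableOn (fun u : ℝ => (c - u) ^ e) (Set.Ioc (c - R) c) volume :=
    (intervalIntegrable_iff_integrableOn_Ioc_of_le (by linarith)).mp hiiL
  have hL1 : ∫⁻ u in Set.Ioc (c - R) c, ENNReal.ofReal (|u - c| ^ e) ≤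
      ENNReal.ofReal (R ^ (e + 1) / (e + 1)) := by
    have hcongr : ∫⁻ u in Set.Ioc (c - R) c, ENNReal.ofReal (|u - c| ^ e) =
        ∫⁻ u in Set.Ioc (c - R) c, ENNReal.ofReal ((c - u) ^ e) := by
      refine setLIntegral_congr_fun measurableSet_Ioc (fun u hu => ?_)
      rw [abs_sub_comm, abs_of_nonneg (sub_nonneg.2 hu.2)]
    rw [hcongr, ← ofReal_integral_eq_lintegral_ofReal hintL
      ((ae_restrict_iff' measurableSet_Ioc).2 (ae_of_all _ fun u hu =>
        Real.rpow_nonneg (by linarith [hu.2]) e))]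
    refine ENNReal.ofReal_le_ofReal (le_of_eq ?_)
    rw [← intervalIntegral.integral_of_le (by linarith : c - R ≤ c)]
    rw [intervalIntegral.integral_comp_sub_left (fun v : ℝ => v ^ e) c]
    simpa using hval
  have hsub : Set.Ioo (c - R) (c + R) ⊆ Set.Ioc (c - R) c ∪ Set.Ioc c (c + R) := by
    intro u hu
    rcases le_or_gt u c with h | h
    · exact Or.inl ⟨hu.1, h⟩
    · exact Or.inr ⟨h, hu.2.le⟩
  calc ∫⁻ u in Set.Ioo (c - R) (c + R), ENNReal.ofReal (|u - c| ^ e)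
      ≤ ∫⁻ u in Set.Ioc (c - R) c ∪ Set.Ioc c (c + R), ENNReal.ofReal (|u - c| ^ e) :=
        lintegral_mono_set hsub
    _ ≤ (∫⁻ u in Set.Ioc (c - R) c, ENNReal.ofReal (|u - c| ^ e)) +
        ∫⁻ u in Set.Ioc c (c + R), ENNReal.ofReal (|u - c| ^ e) := lintegral_union_le _ _ _
    _ ≤ ENNReal.ofReal (R ^ (e + 1) / (e + 1)) + ENNReal.ofReal (R ^ (e + 1) / (e + 1)) :=
        add_le_add hL1 hR1
    _ = ENNReal.ofReal (2 * R ^ (e + 1) / (e + 1)) := by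
        rw [← ENNReal.ofReal_add hvnn hvnn]; ring_nf

set_option maxHeartbeats 2000000 in
/-- local part estimate. With `0 < α < 1`, `1 < p̃`, `0 < α' < 1`,
`1/p = 1/p̃ - α'`, `p > 1`, `α = 1/q - 1/p`, `q ≤ 1`, `f` a `q`-atom supported in `(-r,r)`
(size bound `r^{-1/q}` and vanishing integral), and `b` with Hölder seminorm `K`, the local
term `A₁ = 1_{(-2r,2r)} S(f)` satisfies
`‖A₁‖_{L^p} ≤ C |β|^α r^{α-α'} K ‖f‖_{L^{p̃}} ≤ C' |β|^α K`. -/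
theorem local_part_estimate
    (α p ptilde α' q : ℝ)
    (hα : 0 < α) (hα1 : α < 1) (hpt : 1 < ptilde) (hα' : 0 < α') (hα'1 : α' < 1)
    (hp : 1 < p) (hrel : 1 / p = 1 / ptilde - α') (hq : 0 < q) (hq1 : q ≤ 1)
    (hαq : α = 1 / q - 1 / p) :
    ∃ C C' : ℝ, 0 < C ∧ 0 < C' ∧
      ∀ (β : ℝ) (r : ℝ), 0 < r →
      ∀ (b f : ℝ → ℂ) (K : ℝ), 0 ≤ K →
        (∀ x y : ℝ, ‖b x - b y‖ ≤ K * |x - y| ^ α) →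
        Measurable f →
        (∀ x : ℝ, x ∉ Set.Ioo (-r) r → f x = 0) →
        (∀ x : ℝ, ‖f x‖ ≤ r ^ (-(1 / q))) →
        (∫ x : ℝ, f x) = 0 →
        (∫ x : ℝ, ‖Set.indicator (Set.Ioo (-(2 * r)) (2 * r))
              (fun y : ℝ => ∫ s : ℝ, (b (y + β * (s - y)) - b y) * f s / ((y - s : ℝ) : ℂ))
              x‖ ^ p) ^ (1 / p) ≤
          C * |β| ^ α * r ^ (α - α') * K * (∫ s : ℝ, ‖f s‖ ^ ptilde) ^ (1 / ptilde) ∧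
        C * |β| ^ α * r ^ (α - α') * K * (∫ s : ℝ, ‖f s‖ ^ ptilde) ^ (1 / ptilde) ≤
          C' * |β| ^ α * K := by
  -- scalar preliminaries
  have hp0 : (0:ℝ) < p := lt_trans one_pos hp
  have hpt0 : (0:ℝ) < ptilde := lt_trans one_pos hpt
  have hinvp : (0:ℝ) < 1 / p := by positivity
  have hinvp1 : 1 / p < 1 := by rw [div_lt_one hp0]; exact hp
  have hptl1 : 1 / ptilde < 1 := by rw [div_lt_one hpt0]; exact hpt
  have hptpos : (0:ℝ) < 1 / ptilde := by positivity
  have hpinv : p * (1 / p) = 1 := by field_simp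
  have hptinv : ptilde * (1 / ptilde) = 1 := by field_simp
  have hq1' : (1:ℝ) ≤ 1 / q := (le_div_iff₀ hq).2 (by linarith)
  have hαα' : α' < α := by linarith
  have h1α' : (0:ℝ) < 1 - α' := by linarith
  set t : ℝ := (1 - α')⁻¹ with ht_def
  have ht0 : 0 < t := inv_pos.2 h1α'
  have htt : t * (1 - α') = 1 := by rw [ht_def]; field_simp
  set e : ℝ := (α - 1) * t with he_def
  have he1 : e + 1 = t * (α - α') := by rw [he_def]; linear_combination (-1 : ℝ) * htt
  have he1pos : 0 < e + 1 := by rw [he1]; exact mul_pos ht0 (by linarith)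
  have he : -1 < e := by linarith
  have hXpos : (0:ℝ) < 1 - α' - 1/p := by linarith
  set X : ℝ := 1 - α' - 1/p with hX_def
  have hPden : (0:ℝ) < 1 - 1/p := by linarith
  set P : ℝ := (1 - 1/p)⁻¹ with hP_def
  have hPpos : 0 < P := inv_pos.2 hPden
  have hPP : P * (1 - 1/p) = 1 := by rw [hP_def]; exact inv_mul_cancel₀ hPden.ne'
  have hPinv2 : P * (1 / P) = 1 := mul_one_div_cancel hPpos.ne'
  have hconj1 : p.HolderConjugate P := by
    rw [Real.holderConjugate_iff]; constructor
    · exact hp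
    · rw [hP_def, inv_inv, ← one_div]; ring
  have hXP : (0:ℝ) < X * P := mul_pos hXpos hPpos
  have hXP1 : X * P < 1 := by
    have h6 : X * P < (1 - 1/p) * P := by
      refine mul_lt_mul_of_pos_right ?_ hPpos
      rw [hX_def]; linarith
    have h7 : (1 - 1/p) * P = 1 := by linear_combination hPP
    exact lt_of_lt_of_le h6 h7.le
  set a : ℝ := (X * P)⁻¹ with ha_def
  set bb : ℝ := (α' * P)⁻¹ with hbb_def
  have hαP : (0:ℝ) < α' * P := mul_pos hα' hPpos
  have hXPinv : X * P * (X * P)⁻¹ = 1 := mul_inv_cancel₀ hXP.ne'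
  have hbbinv : α' * P * (α' * P)⁻¹ = 1 := mul_inv_cancel₀ hαP.ne'
  have hconj2 : a.HolderConjugate bb := by
    rw [Real.holderConjugate_iff]; constructor
    · rw [ha_def]; exact (one_lt_inv₀ hXP).2 hXP1
    · rw [ha_def, hbb_def, inv_inv, inv_inv, hX_def]
      linear_combination hPP
  -- the constants
  have hbase : (0:ℝ) < 2 * 3 ^ (e + 1) / (e + 1) := by
    refine div_pos ?_ he1pos
    have : (0:ℝ) < (3:ℝ) ^ (e + 1) := Real.rpow_pos_of_pos (by norm_num) _
    linarith
  set Cc : ℝ := (2 * 3 ^ (e + 1) / (e + 1)) ^ (1 - α') with hCc_def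
  have hCpos : 0 < Cc := Real.rpow_pos_of_pos hbase _
  refine ⟨Cc, Cc * 2 ^ (1 / ptilde), hCpos,
    mul_pos hCpos (Real.rpow_pos_of_pos two_pos _), ?_⟩
  intro β r hr b f K hK hb hfm hsupp hbd _hvan
  set S : Set ℝ := Set.Ioo (-r) r with hS_def
  set Y : Set ℝ := Set.Ioo (-(2 * r)) (2 * r) with hY_def
  set I : ℝ → ℂ := fun y : ℝ => ∫ s : ℝ, (b (y + β * (s - y)) - b y) * f s / ((y - s : ℝ) : ℂ)
    with hI_def
  set c1 : ℝ := K * |β| ^ α with hc1_def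
  have hc1nn : 0 ≤ c1 := mul_nonneg hK (Real.rpow_nonneg (abs_nonneg _) _)
  -- continuity of b
  have hbc : Continuous b := by
    rw [continuous_iff_continuousAt]
    intro x
    rw [ContinuousAt, tendsto_iff_norm_sub_tendsto_zero]
    have htend : Filter.Tendsto (fun y : ℝ => K * |y - x| ^ α) (nhds x) (nhds 0) := by
      have h1 : Filter.Tendsto (fun y : ℝ => |y - x|) (nhds x) (nhds 0) := by
        have hcont : Continuous (fun y : ℝ => |y - x|) :=
          (continuous_id.sub continuous_const).abs
        have := hcont.tendsto x
        simpa using this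
      have h2 : Filter.Tendsto (fun z : ℝ => K * z ^ α) (nhds 0) (nhds 0) := by
        have hc : ContinuousAt (fun z : ℝ => z ^ α) 0 :=
          Real.continuousAt_rpow_const 0 α (Or.inr hα.le)
        have h3 : ContinuousAt (fun z : ℝ => K * z ^ α) 0 := continuousAt_const.mul hc
        have h4 := h3.tendsto
        simpa [Real.zero_rpow hα.ne'] using h4
      exact h2.comp h1
    exact squeeze_zero (fun y => norm_nonneg _) (fun y => hb y x) htend
  -- measurability of the inner integrand and of I
  have hgm : Measurable (fun z : ℝ × ℝ =>
      (b (z.1 + β * (z.2 - z.1)) - b z.1) * f z.2 / ((z.1 - z.2 : ℝ) : ℂ)) := by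
    apply Measurable.div
    · apply Measurable.mul
      · exact ((hbc.measurable).comp (measurable_fst.add
          (measurable_const.mul (measurable_snd.sub measurable_fst)))).sub
          (hbc.measurable.comp measurable_fst)
      · exact hfm.comp measurable_snd
    · exact Complex.measurable_ofReal.comp (measurable_fst.sub measurable_snd)
  have hIm : StronglyMeasurable I := by
    simp only [hI_def]
    exact hgm.stronglyMeasurable.integral_prod_right'
  -- key pointwise bound on the integrand
  have hkey : ∀ y s : ℝ, ‖(b (y + β * (s - y)) - b y) * f s / ((y - s : ℝ) : ℂ)‖ ≤
      c1 * (|y - s| ^ (α - 1) * ‖f s‖) := by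
    intro y s
    rcases eq_or_ne s y with hsy | hsy
    · subst hsy
      simp [sub_self, Real.zero_rpow (show α - 1 ≠ 0 by linarith)]
    · have habs : (0:ℝ) < |y - s| := abs_pos.2 (sub_ne_zero.2 (Ne.symm hsy))
      have h1 : ‖(b (y + β * (s - y)) - b y) * f s / ((y - s : ℝ) : ℂ)‖ =
          ‖b (y + β * (s - y)) - b y‖ * ‖f s‖ / |y - s| := by
        rw [norm_div, norm_mul, Complex.norm_real, Real.norm_eq_abs]
      have h2 : ‖b (y + β * (s - y)) - b y‖ ≤ c1 * |y - s| ^ α := by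
        calc ‖b (y + β * (s - y)) - b y‖ ≤ K * |y + β * (s - y) - y| ^ α := hb _ _
          _ = K * (|β| ^ α * |y - s| ^ α) := by
              rw [show y + β * (s - y) - y = β * (s - y) by ring, abs_mul,
                Real.mul_rpow (abs_nonneg _) (abs_nonneg _), abs_sub_comm s y]
          _ = c1 * |y - s| ^ α := by rw [hc1_def]; ring
      rw [h1]
      have h3 : ‖b (y + β * (s - y)) - b y‖ * ‖f s‖ / |y - s| ≤
          c1 * |y - s| ^ α * ‖f s‖ / |y - s| :=
        (div_le_div_iff_of_pos_right habs).2 (mul_le_mul_of_nonneg_right h2 (norm_nonneg _))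
      refine h3.trans (le_of_eq ?_)
      rw [Real.rpow_sub habs, Real.rpow_one]
      ring
  -- ENNReal-valued building blocks
  set Fe : ℝ → ℝ≥0∞ := fun s => ENNReal.ofReal ‖f s‖ with hFe_def
  have hFem : Measurable Fe := ENNReal.measurable_ofReal.comp hfm.norm
  set ke : ℝ → ℝ → ℝ≥0∞ := fun y s =>
    S.indicator (fun s' => ENNReal.ofReal (|y - s'| ^ (α - 1))) s with hke_def
  have hkem : ∀ y, Measurable (ke y) := by
    intro y
    exact Measurable.indicator (ENNReal.measurable_ofReal.comp
      (((continuous_const.sub continuous_id).abs.measurable).pow measurable_const))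
      measurableSet_Ioo
  have hkemj : Measurable (fun z : ℝ × ℝ => ke z.1 z.2) := by
    have heq : (fun z : ℝ × ℝ => ke z.1 z.2) = (Set.univ ×ˢ S).indicator
        (fun z : ℝ × ℝ => ENNReal.ofReal (|z.1 - z.2| ^ (α - 1))) := by
      funext z
      by_cases hz : z.2 ∈ S
      · simp only [hke_def, Set.indicator_of_mem hz,
          Set.indicator_of_mem (Set.mem_prod.2 ⟨Set.mem_univ _, hz⟩)]
      · simp only [hke_def, Set.indicator_of_notMem hz,
          Set.indicator_of_notMem (fun h => hz (Set.mem_prod.1 h).2)]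
    rw [heq]
    exact Measurable.indicator (ENNReal.measurable_ofReal.comp
      (((measurable_fst.sub measurable_snd).abs).pow measurable_const))
      (MeasurableSet.univ.prod measurableSet_Ioo)
  set N : ℝ≥0∞ := ∫⁻ s, (Fe s) ^ ptilde with hN_def
  -- finiteness of N
  have hNle : N ≤ ENNReal.ofReal ((r ^ (-(1/q))) ^ ptilde) * ENNReal.ofReal (2 * r) := by
    rw [hN_def]
    have hptw : ∀ s, (Fe s) ^ ptilde ≤
        S.indicator (fun _ => ENNReal.ofReal ((r ^ (-(1/q))) ^ ptilde)) s := by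
      intro s
      by_cases hs : s ∈ S
      · simp only [Set.indicator_of_mem hs, hFe_def]
        rw [ENNReal.ofReal_rpow_of_nonneg (norm_nonneg _) hpt0.le]
        exact ENNReal.ofReal_le_ofReal
          (Real.rpow_le_rpow (norm_nonneg _) (hbd s) hpt0.le)
      · simp only [Set.indicator_of_notMem hs, hFe_def, hsupp s hs, norm_zero,
          ENNReal.ofReal_zero, ENNReal.zero_rpow_of_pos hpt0, le_refl]
    calc ∫⁻ s, (Fe s) ^ ptilde
        ≤ ∫⁻ s, S.indicator (fun _ => ENNReal.ofReal ((r ^ (-(1/q))) ^ ptilde)) s :=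
          lintegral_mono hptw
      _ = ENNReal.ofReal ((r ^ (-(1/q))) ^ ptilde) * volume S := by
          rw [lintegral_indicator measurableSet_Ioo, setLIntegral_const]
      _ = ENNReal.ofReal ((r ^ (-(1/q))) ^ ptilde) * ENNReal.ofReal (2 * r) := by
          rw [hS_def, Real.volume_Ioo, show r - -r = 2 * r by ring]
  have hNtop : N ≠ ⊤ :=
    ne_top_of_le_ne_top (ENNReal.mul_ne_top ENNReal.ofReal_ne_top ENNReal.ofReal_ne_top) hNle
  -- bound on the inner integral
  have hIbd : ∀ y : ℝ, ENNReal.ofReal ‖I y‖ ≤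
      ENNReal.ofReal c1 * ∫⁻ s, ke y s * Fe s := by
    intro y
    have h0 : ENNReal.ofReal ‖I y‖ ≤ ∫⁻ s, (‖(b (y + β * (s - y)) - b y) * f s /
        ((y - s : ℝ) : ℂ)‖₊ : ℝ≥0∞) := by
      simp only [hI_def, ofReal_norm]
      exact enorm_integral_le_lintegral_enorm _
    refine h0.trans ?_
    have h1 : ∀ s, (‖(b (y + β * (s - y)) - b y) * f s / ((y - s : ℝ) : ℂ)‖₊ : ℝ≥0∞) ≤
        ENNReal.ofReal c1 * (ke y s * Fe s) := by
      intro s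
      rw [← ENNReal.ofReal_coe_nnreal, coe_nnnorm]
      by_cases hs : s ∈ S
      · calc ENNReal.ofReal ‖(b (y + β * (s - y)) - b y) * f s / ((y - s : ℝ) : ℂ)‖
            ≤ ENNReal.ofReal (c1 * (|y - s| ^ (α - 1) * ‖f s‖)) :=
              ENNReal.ofReal_le_ofReal (hkey y s)
          _ = ENNReal.ofReal c1 * (ENNReal.ofReal (|y - s| ^ (α - 1)) *
              ENNReal.ofReal ‖f s‖) := by
              rw [ENNReal.ofReal_mul hc1nn,
                ENNReal.ofReal_mul (Real.rpow_nonneg (abs_nonneg _) _)]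
          _ = ENNReal.ofReal c1 * (ke y s * Fe s) := by
              simp only [hke_def, hFe_def, Set.indicator_of_mem hs]
      · rw [hsupp s hs]
        simp
    calc ∫⁻ s, (‖(b (y + β * (s - y)) - b y) * f s / ((y - s : ℝ) : ℂ)‖₊ : ℝ≥0∞)
        ≤ ∫⁻ s, ENNReal.ofReal c1 * (ke y s * Fe s) := lintegral_mono h1
      _ = ENNReal.ofReal c1 * ∫⁻ s, ke y s * Fe s :=
          lintegral_const_mul' _ _ ENNReal.ofReal_ne_top
  -- the W kernel
  set We : ℝ → ℝ → ℝ≥0∞ := fun y s => (ke y s) ^ t * (Fe s) ^ ptilde with hWe_def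
  have hWem : ∀ y, Measurable (We y) :=
    fun y => ((hkem y).pow measurable_const).mul (hFem.pow measurable_const)
  have hWemj : Measurable (fun z : ℝ × ℝ => We z.1 z.2) :=
    (hkemj.pow measurable_const).mul ((hFem.comp measurable_snd).pow measurable_const)
  -- Hoelder inequality applied for each fixed y
  have hholder : ∀ y : ℝ, (∫⁻ s, ke y s * Fe s) ≤
      (∫⁻ s, We y s) ^ (1/p) * ((∫⁻ s, (ke y s) ^ t) ^ X * N ^ α') := by
    intro y
    set g1 : ℝ → ℝ≥0∞ := fun s => (We y s) ^ (1/p) with hg1_def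
    set g2 : ℝ → ℝ≥0∞ := fun s => (ke y s) ^ (t * X) * (Fe s) ^ (ptilde * α') with hg2_def
    have hg1m : Measurable g1 := (hWem y).pow measurable_const
    have hg2m : Measurable g2 :=
      ((hkem y).pow measurable_const).mul (hFem.pow measurable_const)
    have hfact : ∀ s, ke y s * Fe s = (g1 * g2) s := by
      intro s
      simp only [Pi.mul_apply, hg1_def, hg2_def, hWe_def]
      rw [ENNReal.mul_rpow_of_nonneg _ _ hinvp.le, ← ENNReal.rpow_mul, ← ENNReal.rpow_mul]
      rw [mul_mul_mul_comm]
      rw [← ENNReal.rpow_add_of_nonneg _ _ (mul_nonneg ht0.le hinvp.le)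
        (mul_nonneg ht0.le hXpos.le),
        ← ENNReal.rpow_add_of_nonneg _ _ (mul_nonneg hpt0.le hinvp.le)
        (mul_nonneg hpt0.le hα'.le)]
      rw [show t * (1/p) + t * X = 1 by rw [hX_def]; linear_combination htt,
        show ptilde * (1/p) + ptilde * α' = 1 by
          have hpp : 1/p + α' = 1/ptilde := by linarith
          linear_combination ptilde * hpp + hptinv]
      rw [ENNReal.rpow_one, ENNReal.rpow_one]
    have hH1 := ENNReal.lintegral_mul_le_Lp_mul_Lq volume hconj1
      hg1m.aemeasurable hg2m.aemeasurable
    have e1 : ∫⁻ s, g1 s ^ p = ∫⁻ s, We y s := by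
      refine lintegral_congr fun s => ?_
      simp only [hg1_def]
      rw [← ENNReal.rpow_mul, one_div_mul_cancel hp0.ne', ENNReal.rpow_one]
    set h1 : ℝ → ℝ≥0∞ := fun s => (ke y s) ^ (t * X * P) with hh1_def
    set h2 : ℝ → ℝ≥0∞ := fun s => (Fe s) ^ (ptilde * α' * P) with hh2_def
    have hh1m : Measurable h1 := (hkem y).pow measurable_const
    have hh2m : Measurable h2 := hFem.pow measurable_const
    have e2 : ∫⁻ s, g2 s ^ P = ∫⁻ s, (h1 * h2) s := by
      refine lintegral_congr fun s => ?_
      simp only [Pi.mul_apply, hg2_def, hh1_def, hh2_def]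
      rw [ENNReal.mul_rpow_of_nonneg _ _ hPpos.le, ← ENNReal.rpow_mul, ← ENNReal.rpow_mul]
    have hH2 := ENNReal.lintegral_mul_le_Lp_mul_Lq volume hconj2
      hh1m.aemeasurable hh2m.aemeasurable
    have e4 : ∫⁻ s, h1 s ^ a = ∫⁻ s, (ke y s) ^ t := by
      refine lintegral_congr fun s => ?_
      simp only [hh1_def]
      rw [← ENNReal.rpow_mul]
      congr 1
      rw [ha_def]
      linear_combination t * hXPinv
    have e5 : ∫⁻ s, h2 s ^ bb = N := by
      rw [hN_def]
      refine lintegral_congr fun s => ?_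
      simp only [hh2_def]
      rw [← ENNReal.rpow_mul]
      congr 1
      rw [hbb_def]
      linear_combination ptilde * hbbinv
    have h2nd : (∫⁻ s, g2 s ^ P) ^ (1/P) ≤ (∫⁻ s, (ke y s) ^ t) ^ X * N ^ α' := by
      have hle : ∫⁻ s, g2 s ^ P ≤
          (∫⁻ s, (ke y s) ^ t) ^ (1/a) * N ^ (1/bb) := by
        rw [e2, ← e4, ← e5]
        exact hH2
      calc (∫⁻ s, g2 s ^ P) ^ (1/P)
          ≤ ((∫⁻ s, (ke y s) ^ t) ^ (1/a) * N ^ (1/bb)) ^ (1/P) :=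
            ENNReal.rpow_le_rpow hle (one_div_nonneg.2 hPpos.le)
        _ = (∫⁻ s, (ke y s) ^ t) ^ ((1/a) * (1/P)) * N ^ ((1/bb) * (1/P)) := by
            rw [ENNReal.mul_rpow_of_nonneg _ _ (one_div_nonneg.2 hPpos.le),
              ← ENNReal.rpow_mul, ← ENNReal.rpow_mul]
        _ = (∫⁻ s, (ke y s) ^ t) ^ X * N ^ α' := by
            rw [show (1/a) * (1/P) = X by
              rw [ha_def, one_div, inv_inv]
              linear_combination X * hPinv2,
              show (1/bb) * (1/P) = α' by
              rw [hbb_def, one_div, inv_inv]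
              linear_combination α' * hPinv2]
    calc ∫⁻ s, ke y s * Fe s = ∫⁻ s, (g1 * g2) s := lintegral_congr hfact
      _ ≤ (∫⁻ s, g1 s ^ p) ^ (1/p) * (∫⁻ s, g2 s ^ P) ^ (1/P) := hH1
      _ = (∫⁻ s, We y s) ^ (1/p) * (∫⁻ s, g2 s ^ P) ^ (1/P) := by rw [e1]
      _ ≤ (∫⁻ s, We y s) ^ (1/p) * ((∫⁻ s, (ke y s) ^ t) ^ X * N ^ α') :=
          mul_le_mul_right h2nd _
  -- the J bound
  set J : ℝ≥0∞ := ENNReal.ofReal (2 * (3 * r) ^ (e + 1) / (e + 1)) with hJ_def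
  have hket : ∀ y s, (ke y s) ^ t = S.indicator
      (fun s' => ENNReal.ofReal (|s' - y| ^ e)) s := by
    intro y s
    by_cases hs : s ∈ S
    · simp only [hke_def, Set.indicator_of_mem hs]
      rw [ENNReal.ofReal_rpow_of_nonneg (Real.rpow_nonneg (abs_nonneg _) _) ht0.le,
        ← Real.rpow_mul (abs_nonneg _), ← he_def, abs_sub_comm]
    · simp only [hke_def, Set.indicator_of_notMem hs]
      rw [ENNReal.zero_rpow_of_pos ht0]
  have hJy : ∀ y ∈ Y, (∫⁻ s, (ke y s) ^ t) ≤ J := by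
    intro y hy
    rw [lintegral_congr (hket y), lintegral_indicator measurableSet_Ioo]
    refine le_trans (lintegral_mono_set ?_)
      (lint_abs_rpow_bound he he1pos y (3 * r) (by linarith))
    intro u hu
    rw [hY_def] at hy
    obtain ⟨h1, h2⟩ := hu
    obtain ⟨hy1, hy2⟩ := hy
    exact ⟨by linarith, by linarith⟩
  have hJs : ∀ s ∈ S, (∫⁻ y in Y, ENNReal.ofReal (|y - s| ^ e)) ≤ J := by
    intro s hs
    refine le_trans (lintegral_mono_set ?_)
      (lint_abs_rpow_bound he he1pos s (3 * r) (by linarith))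
    intro u hu
    rw [hS_def] at hs
    obtain ⟨h1, h2⟩ := hu
    obtain ⟨hs1, hs2⟩ := hs
    exact ⟨by linarith, by linarith⟩
  -- pointwise bound for y in Y
  set c2 : ℝ≥0∞ := ENNReal.ofReal c1 ^ p * J ^ (X * p) * N ^ (α' * p) with hc2_def
  have hc2top : c2 ≠ ⊤ := by
    rw [hc2_def]
    exact ENNReal.mul_ne_top (ENNReal.mul_ne_top
      (ENNReal.rpow_ne_top_of_nonneg hp0.le ENNReal.ofReal_ne_top)
      (ENNReal.rpow_ne_top_of_nonneg (mul_nonneg hXpos.le hp0.le) ENNReal.ofReal_ne_top))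
      (ENNReal.rpow_ne_top_of_nonneg (mul_nonneg hα'.le hp0.le) hNtop)
  have hper : ∀ y ∈ Y, ENNReal.ofReal (‖I y‖ ^ p) ≤ c2 * ∫⁻ s, We y s := by
    intro y hy
    rw [← ENNReal.ofReal_rpow_of_nonneg (norm_nonneg _) hp0.le]
    calc ENNReal.ofReal ‖I y‖ ^ p
        ≤ (ENNReal.ofReal c1 * ∫⁻ s, ke y s * Fe s) ^ p :=
          ENNReal.rpow_le_rpow (hIbd y) hp0.le
      _ ≤ (ENNReal.ofReal c1 * ((∫⁻ s, We y s) ^ (1/p) *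
          ((∫⁻ s, (ke y s) ^ t) ^ X * N ^ α'))) ^ p :=
          ENNReal.rpow_le_rpow (mul_le_mul_right (hholder y) _) hp0.le
      _ ≤ (ENNReal.ofReal c1 * ((∫⁻ s, We y s) ^ (1/p) * (J ^ X * N ^ α'))) ^ p := by
          refine ENNReal.rpow_le_rpow (mul_le_mul_right (mul_le_mul_right ?_ _) _) hp0.le
          exact mul_le_mul_left (ENNReal.rpow_le_rpow (hJy y hy) hXpos.le) _
      _ = c2 * ∫⁻ s, We y s := by
          rw [ENNReal.mul_rpow_of_nonneg _ _ hp0.le, ENNReal.mul_rpow_of_nonneg _ _ hp0.le,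
            ENNReal.mul_rpow_of_nonneg _ _ hp0.le,
            ← ENNReal.rpow_mul (∫⁻ s, We y s) (1/p) p,
            one_div_mul_cancel hp0.ne', ENNReal.rpow_one,
            ← ENNReal.rpow_mul J X p, ← ENNReal.rpow_mul N α' p, hc2_def]
          ring
  -- swap the double integral
  have hswapmeas : AEMeasurable (Function.uncurry fun y s =>
      (Y ×ˢ (Set.univ : Set ℝ)).indicator (fun z : ℝ × ℝ => We z.1 z.2) (y, s))
      (volume.prod volume) := by
    apply Measurable.aemeasurable
    have huncurry : (Function.uncurry fun y s =>
        (Y ×ˢ (Set.univ : Set ℝ)).indicator (fun z : ℝ × ℝ => We z.1 z.2) (y, s)) =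
        (Y ×ˢ (Set.univ : Set ℝ)).indicator (fun z : ℝ × ℝ => We z.1 z.2) := by
      funext z; rfl
    rw [huncurry]
    exact Measurable.indicator hWemj (measurableSet_Ioo.prod MeasurableSet.univ)
  have hdouble : ∫⁻ y in Y, ∫⁻ s, We y s ≤ J * N := by
    have hswap : ∫⁻ y in Y, ∫⁻ s, We y s = ∫⁻ s, ∫⁻ y in Y, We y s := by
      rw [← lintegral_indicator measurableSet_Ioo]
      have e1 : ∀ y, Y.indicator (fun y' => ∫⁻ s, We y' s) y =
          ∫⁻ s, (Y ×ˢ (Set.univ : Set ℝ)).indicator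
            (fun z : ℝ × ℝ => We z.1 z.2) (y, s) := by
        intro y
        by_cases hy : y ∈ Y
        · rw [Set.indicator_of_mem hy]
          refine lintegral_congr fun s => ?_
          rw [Set.indicator_of_mem (Set.mem_prod.2 ⟨hy, Set.mem_univ _⟩)]
        · rw [Set.indicator_of_notMem hy]
          have hz : ∀ s : ℝ, (Y ×ˢ (Set.univ : Set ℝ)).indicator
              (fun z : ℝ × ℝ => We z.1 z.2) (y, s) = 0 := fun s =>
            Set.indicator_of_notMem (fun h => hy (Set.mem_prod.1 h).1) _
          rw [lintegral_congr hz, lintegral_zero]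
      rw [lintegral_congr e1, lintegral_lintegral_swap hswapmeas]
      refine lintegral_congr fun s => ?_
      rw [← lintegral_indicator measurableSet_Ioo]
      refine lintegral_congr fun y => ?_
      by_cases hy : y ∈ Y
      · rw [Set.indicator_of_mem (Set.mem_prod.2 ⟨hy, Set.mem_univ _⟩),
          Set.indicator_of_mem hy]
      · have hz : (Y ×ˢ (Set.univ : Set ℝ)).indicator
            (fun z : ℝ × ℝ => We z.1 z.2) (y, s) = 0 :=
          Set.indicator_of_notMem (fun h => hy (Set.mem_prod.1 h).1) _
        rw [hz, Set.indicator_of_notMem hy]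
    rw [hswap]
    have hFet : ∀ s : ℝ, (Fe s) ^ ptilde ≠ ⊤ :=
      fun s => ENNReal.rpow_ne_top_of_nonneg hpt0.le ENNReal.ofReal_ne_top
    have hinner : ∀ s, (∫⁻ y in Y, We y s) ≤ (Fe s) ^ ptilde * J := by
      intro s
      have e2 : ∫⁻ y in Y, We y s = (∫⁻ y in Y, (ke y s) ^ t) * (Fe s) ^ ptilde := by
        simp only [hWe_def]
        exact lintegral_mul_const' _ _ (hFet s)
      rw [e2]
      by_cases hs : s ∈ S
      · have e3 : ∫⁻ y in Y, (ke y s) ^ t = ∫⁻ y in Y, ENNReal.ofReal (|y - s| ^ e) := by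
          refine lintegral_congr fun y => ?_
          rw [hket y s, Set.indicator_of_mem hs, abs_sub_comm]
        rw [e3, mul_comm]
        exact mul_le_mul_right (hJs s hs) _
      · have e3 : ∫⁻ y in Y, (ke y s) ^ t = 0 := by
          have hz : ∀ y, (ke y s) ^ t = 0 := fun y => by
            rw [hket y s, Set.indicator_of_notMem hs]
          rw [lintegral_congr hz, lintegral_zero]
        rw [e3, zero_mul]
        exact zero_le
    calc ∫⁻ s, ∫⁻ y in Y, We y s ≤ ∫⁻ s, (Fe s) ^ ptilde * J := lintegral_mono hinner
      _ = N * J := by rw [hN_def]; exact lintegral_mul_const' _ _ ENNReal.ofReal_ne_top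
      _ = J * N := mul_comm _ _
  -- the full lintegral bound
  set A1 : ℝ → ℂ := Y.indicator I with hA1_def
  set Lam : ℝ≥0∞ := ∫⁻ y, ENNReal.ofReal (‖A1 y‖ ^ p) with hLam_def
  have hLam1 : Lam = ∫⁻ y in Y, ENNReal.ofReal (‖I y‖ ^ p) := by
    rw [hLam_def, ← lintegral_indicator measurableSet_Ioo]
    refine lintegral_congr fun y => ?_
    by_cases hy : y ∈ Y
    · rw [hA1_def, Set.indicator_of_mem hy, Set.indicator_of_mem hy]
    · rw [hA1_def, Set.indicator_of_notMem hy, Set.indicator_of_notMem hy]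
      simp [Real.zero_rpow hp0.ne']
  have hLambd : Lam ≤ c2 * (J * N) := by
    rw [hLam1]
    calc ∫⁻ y in Y, ENNReal.ofReal (‖I y‖ ^ p)
        ≤ ∫⁻ y in Y, c2 * ∫⁻ s, We y s := by
          refine setLIntegral_mono (Measurable.const_mul ?_ c2) hper
          exact Measurable.lintegral_prod_right' hWemj
      _ = c2 * ∫⁻ y in Y, ∫⁻ s, We y s := lintegral_const_mul' _ _ hc2top
      _ ≤ c2 * (J * N) := mul_le_mul_right hdouble _
  -- convert to real integrals
  have hA1meas : Measurable A1 := hIm.measurable.indicator measurableSet_Ioo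
  have hA1sm : AEStronglyMeasurable (fun y => ‖A1 y‖ ^ p) volume :=
    (hA1meas.norm.pow measurable_const).aestronglyMeasurable
  have hintLam : ∫ x, ‖A1 x‖ ^ p = Lam.toReal := by
    rw [hLam_def]
    exact integral_eq_lintegral_of_nonneg_ae
      (ae_of_all _ fun y => Real.rpow_nonneg (norm_nonneg _) _) hA1sm
  set Nr : ℝ := N.toReal with hNr_def
  have hNrnn : 0 ≤ Nr := ENNReal.toReal_nonneg
  have hNreq : ∫ s, ‖f s‖ ^ ptilde = Nr := by
    rw [hNr_def, hN_def]
    rw [integral_eq_lintegral_of_nonneg_ae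
      (ae_of_all _ fun s => Real.rpow_nonneg (norm_nonneg _) _)
      (hfm.norm.pow measurable_const).aestronglyMeasurable]
    congr 1
    refine lintegral_congr fun s => ?_
    simp only [hFe_def]
    rw [ENNReal.ofReal_rpow_of_nonneg (norm_nonneg _) hpt0.le]
  set Jr : ℝ := 2 * (3 * r) ^ (e + 1) / (e + 1) with hJr_def
  have hJrpos : 0 < Jr := by
    rw [hJr_def]
    refine div_pos ?_ he1pos
    have : (0:ℝ) < (3 * r) ^ (e + 1) := Real.rpow_pos_of_pos (by linarith) _
    linarith
  have hLamreal : ∫ x, ‖A1 x‖ ^ p ≤ c1 ^ p * Jr ^ (X * p) * Nr ^ (α' * p) * (Jr * Nr) := by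
    rw [hintLam]
    have htopfin : c2 * (J * N) ≠ ⊤ :=
      ENNReal.mul_ne_top hc2top (ENNReal.mul_ne_top ENNReal.ofReal_ne_top hNtop)
    have h2 := ENNReal.toReal_mono htopfin hLambd
    refine h2.trans (le_of_eq ?_)
    rw [hc2_def, hJ_def]
    rw [ENNReal.toReal_mul, ENNReal.toReal_mul, ENNReal.toReal_mul, ENNReal.toReal_mul]
    rw [← ENNReal.toReal_rpow, ← ENNReal.toReal_rpow, ← ENNReal.toReal_rpow]
    rw [ENNReal.toReal_ofReal hc1nn, ENNReal.toReal_ofReal hJrpos.le]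
  -- final computation for inequality 1
  have hD : (c1 ^ p * Jr ^ (X * p) * Nr ^ (α' * p) * (Jr * Nr)) ^ (1/p) =
      Cc * |β| ^ α * r ^ (α - α') * K * Nr ^ (1 / ptilde) := by
    have hD1 : c1 ^ p * Jr ^ (X * p) * Nr ^ (α' * p) * (Jr * Nr) =
        c1 ^ p * Jr ^ (X * p + 1) * Nr ^ (α' * p + 1) := by
      rw [Real.rpow_add_of_nonneg hJrpos.le (mul_nonneg hXpos.le hp0.le) zero_le_one,
        Real.rpow_add_of_nonneg hNrnn (mul_nonneg hα'.le hp0.le) zero_le_one,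
        Real.rpow_one, Real.rpow_one]
      ring
    rw [hD1]
    rw [Real.mul_rpow (mul_nonneg (Real.rpow_nonneg hc1nn _) (Real.rpow_nonneg hJrpos.le _))
        (Real.rpow_nonneg hNrnn _),
      Real.mul_rpow (Real.rpow_nonneg hc1nn _) (Real.rpow_nonneg hJrpos.le _)]
    rw [← Real.rpow_mul hc1nn, ← Real.rpow_mul hJrpos.le, ← Real.rpow_mul hNrnn]
    rw [hpinv, Real.rpow_one]
    rw [show (X * p + 1) * (1/p) = 1 - α' by
      rw [hX_def]; linear_combination (1 - α' - 1/p) * hpinv]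
    rw [show (α' * p + 1) * (1/p) = 1 / ptilde by
      have h2 : α' + 1/p = 1/ptilde := by linarith
      linear_combination α' * hpinv + h2]
    have hJreq : Jr ^ (1 - α') = Cc * r ^ (α - α') := by
      have h3 : Jr = (2 * 3 ^ (e + 1) / (e + 1)) * r ^ (e + 1) := by
        rw [hJr_def, Real.mul_rpow (by norm_num : (0:ℝ) ≤ 3) hr.le]
        ring
      rw [h3, Real.mul_rpow hbase.le (Real.rpow_nonneg hr.le _),
        ← Real.rpow_mul hr.le, ← hCc_def]
      congr 1
      rw [show (e + 1) * (1 - α') = α - α' by rw [he1]; linear_combination (α - α') * htt]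
    rw [hJreq, hc1_def]
    ring
  constructor
  · -- first inequality
    rw [hNreq]
    calc (∫ x, ‖A1 x‖ ^ p) ^ (1/p)
        ≤ (c1 ^ p * Jr ^ (X * p) * Nr ^ (α' * p) * (Jr * Nr)) ^ (1/p) := by
          refine Real.rpow_le_rpow ?_ hLamreal hinvp.le
          exact integral_nonneg fun x => Real.rpow_nonneg (norm_nonneg _) _
      _ = Cc * |β| ^ α * r ^ (α - α') * K * Nr ^ (1 / ptilde) := hD
  · -- second inequality
    rw [hNreq]
    have hconst_int : Integrable (fun s =>
        S.indicator (fun _ => (r ^ (-(1/q))) ^ ptilde) s) := by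
      refine (integrable_indicator_iff measurableSet_Ioo).2 ?_
      exact integrableOn_const (by
        simp only [hS_def, Real.volume_Ioo]; exact ENNReal.ofReal_ne_top)
    have hfle : ∀ s, ‖f s‖ ^ ptilde ≤
        S.indicator (fun _ => (r ^ (-(1/q))) ^ ptilde) s := by
      intro s
      by_cases hs : s ∈ S
      · rw [Set.indicator_of_mem hs]
        exact Real.rpow_le_rpow (norm_nonneg _) (hbd s) hpt0.le
      · rw [Set.indicator_of_notMem hs, hsupp s hs]
        simp [Real.zero_rpow hpt0.ne']
    have hfint : Integrable (fun s => ‖f s‖ ^ ptilde) := by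
      refine Integrable.mono' hconst_int
        (hfm.norm.pow measurable_const).aestronglyMeasurable (ae_of_all _ fun s => ?_)
      rw [Real.norm_eq_abs, abs_of_nonneg (Real.rpow_nonneg (norm_nonneg _) _)]
      exact hfle s
    have hNb : Nr ≤ 2 * r ^ (1 + (-(1/q)) * ptilde) := by
      rw [← hNreq]
      calc ∫ s, ‖f s‖ ^ ptilde
          ≤ ∫ s, S.indicator (fun _ => (r ^ (-(1/q))) ^ ptilde) s :=
            integral_mono hfint hconst_int hfle
        _ = (volume S).toReal * (r ^ (-(1/q))) ^ ptilde := by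
            rw [integral_indicator_const _ measurableSet_Ioo, smul_eq_mul]; rfl
        _ = 2 * r ^ (1 + (-(1/q)) * ptilde) := by
            rw [hS_def, Real.volume_Ioo,
              ENNReal.toReal_ofReal (by linarith : (0:ℝ) ≤ r - -r),
              ← Real.rpow_mul hr.le, Real.rpow_add hr, Real.rpow_one]
            ring
    have hNrle : Nr ^ (1 / ptilde) ≤
        2 ^ (1 / ptilde) * r ^ ((1 + (-(1/q)) * ptilde) * (1 / ptilde)) := by
      calc Nr ^ (1 / ptilde) ≤ (2 * r ^ (1 + (-(1/q)) * ptilde)) ^ (1 / ptilde) :=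
            Real.rpow_le_rpow hNrnn hNb hptpos.le
        _ = _ := by
            rw [Real.mul_rpow (by norm_num) (Real.rpow_nonneg hr.le _),
              ← Real.rpow_mul hr.le]
    calc Cc * |β| ^ α * r ^ (α - α') * K * Nr ^ (1 / ptilde)
        = (Cc * |β| ^ α * K * r ^ (α - α')) * Nr ^ (1 / ptilde) := by ring
      _ ≤ (Cc * |β| ^ α * K * r ^ (α - α')) *
          (2 ^ (1 / ptilde) * r ^ ((1 + (-(1/q)) * ptilde) * (1 / ptilde))) := by
          refine mul_le_mul_of_nonneg_left hNrle ?_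
          exact mul_nonneg (mul_nonneg (mul_nonneg hCpos.le
            (Real.rpow_nonneg (abs_nonneg _) _)) hK) (Real.rpow_nonneg hr.le _)
      _ = (Cc * 2 ^ (1 / ptilde)) * |β| ^ α * K *
          (r ^ (α - α') * r ^ ((1 + (-(1/q)) * ptilde) * (1 / ptilde))) := by ring
      _ = Cc * 2 ^ (1 / ptilde) * |β| ^ α * K := by
          rw [← Real.rpow_add hr]
        
          have hx : α - α' + (1 + (-(1/q)) * ptilde) * (1 / ptilde) = 0 := by
            have h5 : (1 + (-(1/q)) * ptilde) * (1 / ptilde) = 1/ptilde - 1/q := by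
              linear_combination (-(1/q)) * hptinv
            linarith
          rw [hx, Real.rpow_zero, mul_one]
end
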